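/- Let w = ℓ₁ℓ₂⋯ℓₙ where ℓ₁, …, ℓₙ are Lyndon words with ℓ₁^ω ≥ ℓ₂^ω ≥ ⋯ ≥ ℓₙ^ω. Then ℓₙ is the shortest nonempty suffix of w whose infinite power is minimal: for every nonempty suffix s of w one has ℓₙ^ω ≤ s^ω, and every nonempty suffix s of w with s^ω = ℓₙ^ω satisfies |s| ≥ |ℓₙ| (indeed the unique shortest such suffix equals ℓₙ). -/

import Mathlib

set_option linter.unusedSectionVars false


variable {A : Type*} [LinearOrder A] [Inhabited A]

/-- The infinite periodic word `u^ω = uuu⋯`, as a function `ℕ → A`. -/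
def omegaPow (u : List A) : ℕ → A := fun n => u.getD (n % u.length) default

/-- Lexicographic order on infinite words: `s < t` iff at the first position where
they differ, `s` has the smaller letter. -/
def lexLt (s t : ℕ → A) : Prop := ∃ k, (∀ i < k, s i = t i) ∧ s k < t k

/-- Non-strict lexicographic order on infinite words. -/
def lexLe (s t : ℕ → A) : Prop := lexLt s t ∨ s = t

/-- A nonempty word `w` is a Lyndon word: `w` is lexicographically smaller than
each of its nonempty proper suffixes. -/
def IsLyndon (w : List A) : Prop :=
  w ≠ [] ∧ ∀ v, v <:+ w → v ≠ [] → v ≠ w → List.Lex (· < ·) w v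

/-! ### Auxiliary definitions -/

/-- Prepending a finite word to an infinite word. -/
def wcons (u : List A) (x : ℕ → A) : ℕ → A :=
  fun n => if n < u.length then u.getD n default else x (n - u.length)

/-- Iterated prepending. -/
def witer (u : List A) (x : ℕ → A) : ℕ → (ℕ → A)
  | 0 => x
  | k + 1 => wcons u (witer u x k)

/-! ### Basic order lemmas -/

theorem lexLt_irrefl (s : ℕ → A) : ¬ lexLt s s := by
  rintro ⟨k, _, hk⟩; exact lt_irrefl _ hk

theorem lexLt_asymm {s t : ℕ → A} (h : lexLt s t) : ¬ lexLt t s := by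
  rintro ⟨k', ha', hk'⟩
  obtain ⟨k, ha, hk⟩ := h
  rcases lt_trichotomy k k' with h1 | rfl | h1
  · exact absurd (ha' k h1).symm (ne_of_lt hk)
  · exact absurd (hk.trans hk') (lt_irrefl _)
  · exact absurd (ha k' h1) (ne_of_gt hk')

theorem lexLt_trans {s t u : ℕ → A} (h1 : lexLt s t) (h2 : lexLt t u) : lexLt s u := by
  obtain ⟨k, ha, hk⟩ := h1
  obtain ⟨k', ha', hk'⟩ := h2
  rcases lt_trichotomy k k' with h | rfl | h
  · exact ⟨k, fun i hi => (ha i hi).trans (ha' i (hi.trans h)), by rw [← ha' k h]; exact hk⟩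
  · exact ⟨k, fun i hi => (ha i hi).trans (ha' i hi), hk.trans hk'⟩
  · exact ⟨k', fun i hi => (ha i (hi.trans h)).trans (ha' i hi), by rw [ha k' h]; exact hk'⟩

theorem lexLe_refl (s : ℕ → A) : lexLe s s := Or.inr rfl

theorem lexLt_of_le_of_lt {s t u : ℕ → A} (h1 : lexLe s t) (h2 : lexLt t u) : lexLt s u := by
  rcases h1 with h1 | rfl
  · exact lexLt_trans h1 h2
  · exact h2

theorem lexLt_of_lt_of_le {s t u : ℕ → A} (h1 : lexLt s t) (h2 : lexLe t u) : lexLt s u := by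
  rcases h2 with h2 | rfl
  · exact lexLt_trans h1 h2
  · exact h1

theorem lexLe_trans {s t u : ℕ → A} (h1 : lexLe s t) (h2 : lexLe t u) : lexLe s u := by
  rcases h1 with h1 | rfl
  · exact Or.inl (lexLt_of_lt_of_le h1 h2)
  · exact h2

theorem lexLt_or_lexLt {s t : ℕ → A} (h : s ≠ t) : lexLt s t ∨ lexLt t s := by
  classical
  have hne : ∃ n, s n ≠ t n := Function.ne_iff.mp h
  have hk : s (Nat.find hne) ≠ t (Nat.find hne) := Nat.find_spec hne
  have hlt : ∀ i < Nat.find hne, s i = t i := fun i hi => not_not.mp (Nat.find_min hne hi)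
  rcases lt_or_gt_of_ne hk with h' | h'
  · exact Or.inl ⟨Nat.find hne, hlt, h'⟩
  · exact Or.inr ⟨Nat.find hne, fun i hi => (hlt i hi).symm, h'⟩

theorem lexLe_of_not_lt {s t : ℕ → A} (h : ¬ lexLt t s) : lexLe s t := by
  by_cases he : s = t
  · exact Or.inr he
  · rcases lexLt_or_lexLt he with h1 | h1
    · exact Or.inl h1
    · exact absurd h1 h

theorem not_lexLt_of_le {x y : ℕ → A} (h : lexLe x y) (h2 : lexLt y x) : False := by
  rcases h with h | rfl
  · exact lexLt_asymm h h2
  · exact lexLt_irrefl _ h2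

/-! ### Basic value lemmas -/

theorem wcons_val_lt (u : List A) (x : ℕ → A) {n : ℕ} (h : n < u.length) :
    wcons u x n = u.getD n default := if_pos h

theorem wcons_val_ge (u : List A) (x : ℕ → A) {n : ℕ} (h : u.length ≤ n) :
    wcons u x n = x (n - u.length) := if_neg (not_lt.mpr h)

theorem omegaPow_val_lt (u : List A) {n : ℕ} (h : n < u.length) :
    omegaPow u n = u.getD n default := by
  simp [omegaPow, Nat.mod_eq_of_lt h]

theorem omegaPow_add_dvd (q : List A) {d : ℕ} (h : q.length ∣ d) (n : ℕ) :
    omegaPow q (n + d) = omegaPow q n := by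
  obtain ⟨c, rfl⟩ := h
  simp [omegaPow, Nat.add_mul_mod_self_left]

theorem getD_drop' (q : List A) (r k : ℕ) :
    (q.drop r).getD k default = q.getD (r + k) default := by
  simp [List.getD_eq_getElem?_getD, List.getElem?_drop]

theorem omegaPow_eq_wcons (u : List A) : omegaPow u = wcons u (omegaPow u) := by
  funext n
  simp only [omegaPow, wcons]
  by_cases h : n < u.length
  · rw [if_pos h, Nat.mod_eq_of_lt h]
  · rw [if_neg h]
    push_neg at h
    rw [Nat.mod_eq_sub_mod h]

theorem wcons_append (a b : List A) (x : ℕ → A) :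
    wcons (a ++ b) x = wcons a (wcons b x) := by
  funext n
  simp only [wcons, List.length_append]
  by_cases h1 : n < a.length
  · rw [if_pos h1, if_pos (by omega : n < a.length + b.length), List.getD_append _ _ _ _ h1]
  · push_neg at h1
    rw [if_neg (not_lt.mpr h1)]
    by_cases h2 : n < a.length + b.length
    · rw [if_pos h2, if_pos (by omega : n - a.length < b.length),
        List.getD_append_right _ _ _ _ h1]
    · rw [if_neg h2, if_neg (by omega : ¬ n - a.length < b.length)]
      congr 1
      omega

theorem wcons_nil (x : ℕ → A) : wcons ([] : List A) x = x := by
  funext n; simp [wcons]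

theorem lexLe_wcons_mono (u : List A) {x y : ℕ → A} (h : lexLe x y) :
    lexLe (wcons u x) (wcons u y) := by
  rcases h with h | rfl
  · obtain ⟨k, ha, hk⟩ := h
    refine Or.inl ⟨u.length + k, fun i hi => ?_, ?_⟩
    · simp only [wcons]
      by_cases h1 : i < u.length
      · rw [if_pos h1, if_pos h1]
      · rw [if_neg h1, if_neg h1]
        exact ha _ (by omega)
    · simp only [wcons]
      rw [if_neg (by omega), if_neg (by omega)]
      simpa using hk
  · exact Or.inr rfl

/-! ### The limit lemma -/

theorem witer_val (u : List A) (x : ℕ → A) :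
    ∀ k n, n < k * u.length → witer u x k n = omegaPow u n := by
  intro k
  induction k with
  | zero => intro n hn; rw [Nat.zero_mul] at hn; omega
  | succ k ih =>
    intro n hn
    show wcons u (witer u x k) n = _
    by_cases h1 : n < u.length
    · rw [wcons_val_lt _ _ h1, omegaPow_val_lt _ h1]
    · push_neg at h1
      rw [wcons_val_ge _ _ h1, ih (n - u.length) (by
        rw [add_one_mul] at hn
        omega)]
      simp only [omegaPow]
      rw [Nat.mod_eq_sub_mod h1]

theorem lexLe_witer (u : List A) {x : ℕ → A} (h : lexLe x (wcons u x)) :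
    ∀ k, lexLe x (witer u x k) := by
  intro k
  induction k with
  | zero => exact lexLe_refl _
  | succ k ih => exact lexLe_trans h (lexLe_wcons_mono u ih)

theorem lexLe_omegaPow_of_le_wcons {u : List A} (hu : u ≠ []) {x : ℕ → A}
    (h : lexLe x (wcons u x)) : lexLe x (omegaPow u) := by
  refine lexLe_of_not_lt ?_
  rintro ⟨m, ha, hm⟩
  have hlen : 1 ≤ u.length := List.length_pos_iff.mpr hu
  have hmlt : ∀ i, i ≤ m → i < (m + 1) * u.length := by
    intro i hi
    have := Nat.succ_mul m u.length
    nlinarith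
  have hiter := lexLe_witer u h (m + 1)
  have hlt : lexLt (witer u x (m + 1)) x := by
    refine ⟨m, fun i hi => ?_, ?_⟩
    · rw [witer_val u x _ i (hmlt i (le_of_lt hi))]
      exact ha i hi
    · rw [witer_val u x _ m (hmlt m le_rfl)]
      exact hm
  exact not_lexLt_of_le hiter hlt

/-! ### Extracting positions from `List.Lex` -/

theorem lex_extract {a b : List A} (h : List.Lex (· < ·) a b) :
    b.length ≤ a.length →
    ∃ k < b.length, (∀ i < k, a.getD i default = b.getD i default) ∧
      a.getD k default < b.getD k default := by
  induction h with
  | nil => intro h; simp at h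
  | @rel a l b l' hab =>
    intro _
    exact ⟨0, by simp, fun i hi => absurd hi (Nat.not_lt_zero i), by simpa using hab⟩
  | @cons a l l' h ih =>
    intro hlen
    simp only [List.length_cons, Nat.add_le_add_iff_right] at hlen
    obtain ⟨k, hk, hagree, hlt⟩ := ih hlen
    refine ⟨k + 1, by simpa using hk, fun i hi => ?_, by simpa using hlt⟩
    match i with
    | 0 => simp
    | i + 1 =>
      simp only [List.getD_cons_succ]
      exact hagree i (by omega)

/-! ### Lyndon word facts -/

theorem lyndon_lt_of_proper_suffix {q v : List A} (hq : IsLyndon q) (hv : v <:+ q)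
    (hne : v ≠ []) (hprop : v ≠ q) (x : ℕ → A)
    (hx : ∀ i < v.length, x i = v.getD i default) :
    lexLt (omegaPow q) x := by
  obtain ⟨k, hk, hagree, hlt⟩ := lex_extract (hq.2 v hv hne hprop) hv.length_le
  refine ⟨k, fun i hi => ?_, ?_⟩
  · rw [omegaPow_val_lt _ (lt_of_lt_of_le (hi.trans hk) hv.length_le), hagree i hi,
      hx i (hi.trans hk)]
  · rw [omegaPow_val_lt _ (lt_of_lt_of_le hk hv.length_le), hx k hk]
    exact hlt

/-- A proper prefix of a Lyndon word has strictly smaller infinite power. -/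
theorem prefix_pow_lt {q p : List A} (hq : IsLyndon q) (r : ℕ) (hr0 : 0 < r)
    (hrq : r < q.length) (hlenp : p.length = r)
    (hpre : ∀ i < r, p.getD i default = q.getD i default) :
    lexLt (omegaPow p) (omegaPow q) := by
  classical
  -- Step 1 : q is not r-periodic throughout
  have hstep1 : ∃ m, m < q.length ∧ q.getD m default ≠ q.getD (m % r) default := by
    by_contra hcon
    push_neg at hcon
    have hsuf : q.drop r <:+ q := List.drop_suffix r q
    have hlen : (q.drop r).length = q.length - r := List.length_drop
    have hne : q.drop r ≠ [] := by
      intro h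
      rw [h] at hlen
      simp at hlen
      omega
    have hneq : q.drop r ≠ q := by
      intro h
      rw [h] at hlen
      omega
    obtain ⟨k, hk, _, hlt⟩ := lex_extract (hq.2 _ hsuf hne hneq) hsuf.length_le
    rw [hlen] at hk
    rw [getD_drop'] at hlt
    have h1 : q.getD (r + k) default = q.getD ((r + k) % r) default := hcon _ (by omega)
    have h2 : q.getD k default = q.getD (k % r) default := hcon _ (by omega)
    rw [Nat.add_mod_left] at h1
    rw [h1, ← h2] at hlt
    exact lt_irrefl _ hlt
  -- Step 2 : least failure point m
  set m := Nat.find hstep1 with hmdef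
  obtain ⟨hmq, hmne⟩ : m < q.length ∧ q.getD m default ≠ q.getD (m % r) default :=
    Nat.find_spec hstep1
  have hmin : ∀ i, i < m → i < q.length → q.getD i default = q.getD (i % r) default := by
    intro i hi hiq
    have := Nat.find_min hstep1 hi
    push_neg at this
    exact this hiq
  have hmr : r ≤ m := by
    by_contra hc
    push_neg at hc
    exact hmne (by rw [Nat.mod_eq_of_lt hc])
  -- Step 3 : analyze the suffix at position t = m - m % r
  have hdm := Nat.div_add_mod m r
  set j := m % r with hjdef
  set t := m - j with htdef
  have hjr : j < r := Nat.mod_lt _ hr0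
  have htmod : ∀ i, (t + i) % r = i % r := by
    intro i
    have ht : t = r * (m / r) := by omega
    rw [ht, Nat.mul_add_mod]
  have ht0 : 0 < t := by
    have : 1 ≤ m / r := (Nat.one_le_div_iff hr0).mpr hmr
    have : r * 1 ≤ r * (m / r) := Nat.mul_le_mul_left r this
    omega
  have htm : t ≤ m := by omega
  have hsuf : q.drop t <:+ q := List.drop_suffix t q
  have hlen : (q.drop t).length = q.length - t := List.length_drop
  have hne : q.drop t ≠ [] := by
    intro h
    rw [h] at hlen
    simp at hlen
    omega
  have hneq : q.drop t ≠ q := by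
    intro h
    rw [h] at hlen
    omega
  obtain ⟨d, hd, hagr, hlt⟩ := lex_extract (hq.2 _ hsuf hne hneq) hsuf.length_le
  rw [hlen] at hd
  rw [getD_drop'] at hlt
  have hdj : d = j := by
    rcases lt_trichotomy d j with h' | h' | h'
    · exfalso
      have htd : t + d < m := by omega
      have h1 : q.getD (t + d) default = q.getD ((t + d) % r) default :=
        hmin _ htd (by omega)
      have h2 : q.getD d default = q.getD (d % r) default := hmin _ (by omega) (by omega)
      rw [htmod d, Nat.mod_eq_of_lt (by omega : d < r)] at h1
      rw [Nat.mod_eq_of_lt (by omega : d < r)] at h2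
      rw [h1, ← h2] at hlt
      exact lt_irrefl _ hlt
    · exact h'
    · exfalso
      have := hagr j h'
      rw [getD_drop'] at this
      have htj : t + j = m := by omega
      rw [htj] at this
      exact hmne (by rw [← this])
  rw [hdj] at hlt
  have htj : t + j = m := by omega
  rw [htj] at hlt
  -- Step 4 : conclude
  refine ⟨m, fun i hi => ?_, ?_⟩
  · have hir : i % r < r := Nat.mod_lt _ hr0
    show p.getD (i % p.length) default = q.getD (i % q.length) default
    rw [hlenp, Nat.mod_eq_of_lt (by omega : i < q.length)]
    rw [hpre _ hir]
    exact (hmin i hi (by omega)).symm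
  · show p.getD (m % p.length) default < q.getD (m % q.length) default
    rw [hlenp, Nat.mod_eq_of_lt hmq, hpre _ hjr]
    exact hlt

/-- A prefix of `q^ω` whose length is not a multiple of `|q|` has strictly smaller
infinite power, for `q` Lyndon. -/
theorem prefix_of_pow_lt {q u : List A} (hq : IsLyndon q) (hu : u ≠ [])
    (hpre : ∀ i < u.length, u.getD i default = omegaPow q i)
    (hnd : ¬ (q.length ∣ u.length)) : lexLt (omegaPow u) (omegaPow q) := by
  have hq0 : 0 < q.length := List.length_pos_iff.mpr hq.1
  have hu0 : 0 < u.length := List.length_pos_iff.mpr hu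
  set r := u.length % q.length with hrdef
  have hr0 : 0 < r := Nat.pos_of_ne_zero (fun h => hnd (Nat.dvd_of_mod_eq_zero h))
  have hrq : r < q.length := Nat.mod_lt _ hq0
  have hdm := Nat.div_add_mod u.length q.length
  by_cases hcase : u.length < q.length
  · have hru : r = u.length := Nat.mod_eq_of_lt hcase
    refine prefix_pow_lt hq r hr0 hrq hru.symm (fun i hi => ?_)
    rw [hpre i (by omega), omegaPow_val_lt _ (by omega)]
  · push_neg at hcase
    have hsuf : q.drop r <:+ q := List.drop_suffix r q
    have hlen : (q.drop r).length = q.length - r := List.length_drop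
    have hne : q.drop r ≠ [] := by
      intro h; rw [h] at hlen; simp at hlen; omega
    have hneq : q.drop r ≠ q := by
      intro h; rw [h] at hlen; omega
    obtain ⟨k, hk, hagree, hlt⟩ := lex_extract (hq.2 _ hsuf hne hneq) hsuf.length_le
    rw [hlen] at hk
    rw [getD_drop'] at hlt
    have hmodq : ∀ i', i' < q.length - r → (u.length + i') % q.length = r + i' := by
      intro i' hi'
      have heq : u.length + i' = q.length * (u.length / q.length) + (r + i') := by omega
      rw [heq, Nat.mul_add_mod, Nat.mod_eq_of_lt (by omega)]
    have huval : ∀ i', i' < q.length → omegaPow u (u.length + i') = q.getD i' default := by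
      intro i' hi'
      show u.getD ((u.length + i') % u.length) default = _
      rw [Nat.add_comm, Nat.add_mod_right, Nat.mod_eq_of_lt (by omega : i' < u.length)]
      rw [hpre i' (by omega), omegaPow_val_lt _ hi']
    refine ⟨u.length + k, fun i hi => ?_, ?_⟩
    · by_cases h1 : i < u.length
      · have := hpre i h1
        show u.getD (i % u.length) default = _
        rw [Nat.mod_eq_of_lt h1]
        exact this
      · push_neg at h1
        obtain ⟨i', rfl⟩ : ∃ i', i = u.length + i' := ⟨i - u.length, by omega⟩
        have hi'k : i' < k := by omega
        rw [huval i' (by omega)]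
        show _ = q.getD ((u.length + i') % q.length) default
        rw [hmodq i' (by omega)]
        rw [hagree i' hi'k, getD_drop']
    · rw [huval k (by omega)]
      show _ < q.getD ((u.length + k) % q.length) default
      rw [hmodq k hk]
      exact hlt

/-- The key step lemma: if `q` is Lyndon, `q^ω ≤ u^ω` and `q^ω ≤ t`, then
`q^ω ≤ u·t`. -/
theorem star_lemma {q u : List A} (hq : IsLyndon q) (hu : u ≠ [])
    (h1 : lexLe (omegaPow q) (omegaPow u)) {t : ℕ → A} (h2 : lexLe (omegaPow q) t) :
    lexLe (omegaPow q) (wcons u t) := by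
  refine lexLe_of_not_lt ?_
  rintro ⟨k, hagree, hk⟩
  by_cases hcase : k < u.length
  · refine not_lexLt_of_le h1 ⟨k, fun i hi => ?_, ?_⟩
    · rw [omegaPow_val_lt _ (hi.trans hcase), ← wcons_val_lt u t (hi.trans hcase)]
      exact hagree i hi
    · rw [omegaPow_val_lt _ hcase, ← wcons_val_lt u t hcase]
      exact hk
  · push_neg at hcase
    have hpre : ∀ i < u.length, u.getD i default = omegaPow q i := by
      intro i hi
      rw [← hagree i (lt_of_lt_of_le hi hcase), wcons_val_lt u t hi]
    by_cases hdvd : q.length ∣ u.length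
    · refine not_lexLt_of_le h2 ⟨k - u.length, fun i hi => ?_, ?_⟩
      · have h3 := hagree (i + u.length) (by omega)
        rw [wcons_val_ge u t (by omega), Nat.add_sub_cancel] at h3
        rw [h3, omegaPow_add_dvd q hdvd]
      · have h4 : wcons u t k = t (k - u.length) := wcons_val_ge u t hcase
        rw [← h4]
        have h5 : omegaPow q (k - u.length) = omegaPow q k := by
          rw [← omegaPow_add_dvd q hdvd (k - u.length)]
          congr 1
          omega
        rw [h5]
        exact hk
    · exact not_lexLt_of_le h1 (prefix_of_pow_lt hq hu hpre hdvd)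

/-! ### List helper lemmas -/

theorem getLastI_eq_getElem' {α : Type*} [Inhabited α] {M : List α} (h : M ≠ []) :
    M.getLastI = M[M.length - 1]'(by
      have := List.length_pos_iff.mpr h
      omega) := by
  rw [List.getLastI_eq_getLast?, List.getLast?_eq_getElem?,
    List.getElem?_eq_getElem (by have := List.length_pos_iff.mpr h; omega), Option.getD_some]

theorem getLastI_cons_of_ne {α : Type*} [Inhabited α] (a : α) {M : List α} (h : M ≠ []) :
    (a :: M).getLastI = M.getLastI := by
  match M, h with
  | b :: M', _ =>
    rw [List.getLastI_eq_getLast?, List.getLastI_eq_getLast?, List.getLast?_cons_cons]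

theorem lastI_suffix_flatten : ∀ (L : List (List A)), L ≠ [] → L.getLastI <:+ L.flatten := by
  intro L
  induction L with
  | nil => intro h; exact absurd rfl h
  | cons a L ih =>
    intro _
    rcases eq_or_ne L [] with rfl | hL
    · rw [List.getLastI_eq_getLast?]
      simp
    · rw [List.flatten_cons, getLastI_cons_of_ne a hL]
      exact (ih hL).trans (List.suffix_append _ _)

theorem suffix_append_cases {s a f : List A} (h : s <:+ a ++ f) :
    s <:+ f ∨ ∃ v, v <:+ a ∧ v ≠ [] ∧ s = v ++ f := by
  obtain ⟨t, ht⟩ := h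
  have h2 := congrArg (List.drop t.length) ht
  rw [List.drop_left, List.drop_append] at h2
  by_cases hc : a.length ≤ t.length
  · left
    rw [List.drop_eq_nil_of_le hc, List.nil_append] at h2
    rw [h2]
    exact List.drop_suffix _ _
  · right
    push_neg at hc
    rw [(by omega : t.length - a.length = 0), List.drop_zero] at h2
    refine ⟨a.drop t.length, List.drop_suffix _ _, ?_, h2⟩
    intro hnil
    have := congrArg List.length hnil
    simp at this
    omega

theorem suffix_flatten_decomp :
    ∀ (L : List (List A)) (s : List A), s <:+ L.flatten → s ≠ [] →
    ∃ j, ∃ (hj : j < L.length), ∃ v, v <:+ L[j] ∧ v ≠ [] ∧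
      s = v ++ (L.drop (j + 1)).flatten := by
  intro L
  induction L with
  | nil =>
    intro s hs hne
    simp only [List.flatten_nil, List.suffix_nil] at hs
    exact absurd hs hne
  | cons a L ih =>
    intro s hs hne
    rw [List.flatten_cons] at hs
    rcases suffix_append_cases hs with hs' | ⟨v, hv, hvne, rfl⟩
    · obtain ⟨j, hj, v, h1, h2, h3⟩ := ih s hs' hne
      exact ⟨j + 1, by simpa using hj, v, h1, h2, h3⟩
    · exact ⟨0, by simp, v, hv, hvne, rfl⟩

/-! ### The main theorem -/

/-- If `w = ℓ₁ℓ₂⋯ℓₙ` with the `ℓᵢ` Lyndon words satisfying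
`ℓ₁^ω ≥ ℓ₂^ω ≥ ⋯ ≥ ℓₙ^ω`, then `ℓₙ` is the shortest nonempty suffix of `w`
with minimal infinite power. -/
theorem last_lyndon_factor_is_shortest_min_suffix (L : List (List A)) (hL : L ≠ [])
    (hLyn : ∀ l ∈ L, IsLyndon l)
    (hchain : ∀ i : ℕ, (h : i + 1 < L.length) →
      lexLe (omegaPow (L[i + 1]'h)) (omegaPow (L[i]'(by omega)))) :
    L.getLastI <:+ L.flatten ∧
    (∀ s : List A, s <:+ L.flatten → s ≠ [] →
      lexLe (omegaPow L.getLastI) (omegaPow s)) ∧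
    (∀ s : List A, s <:+ L.flatten → s ≠ [] →
      omegaPow s = omegaPow L.getLastI → L.getLastI.length ≤ s.length) ∧
    (∀ s : List A, s <:+ L.flatten → s ≠ [] →
      omegaPow s = omegaPow L.getLastI → s.length = L.getLastI.length →
      s = L.getLastI) := by
  have hn0 : 0 < L.length := List.length_pos_iff.mpr hL
  have hlast : L.getLastI = L[L.length - 1]'(by omega) := getLastI_eq_getElem' hL
  have hqmem : L.getLastI ∈ L := by
    rw [hlast]; exact List.getElem_mem _
  have hqLyn : IsLyndon L.getLastI := hLyn _ hqmem
  -- chain, downward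
  have chain_le : ∀ j (hj : j < L.length) i (hij : i ≤ j),
      lexLe (omegaPow (L[j]'hj)) (omegaPow (L[i]'(lt_of_le_of_lt hij hj))) := by
    intro j
    induction j with
    | zero =>
      intro hj i hij
      have h0 : i = 0 := Nat.le_zero.mp hij
      subst h0
      exact lexLe_refl _
    | succ j ihj =>
      intro hj i hij
      rcases Nat.eq_or_lt_of_le hij with hh | hh
      · subst hh
        exact lexLe_refl _
      · exact lexLe_trans (hchain j hj) (ihj (by omega) i (Nat.lt_succ_iff.mp hh))
  have chain' : ∀ j, ∀ (hj : j < L.length),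
      lexLe (omegaPow L.getLastI) (omegaPow (L[j]'hj)) := by
    intro j hj
    rw [hlast]
    exact chain_le (L.length - 1) (by omega) j (by omega)
  -- key step: x ≤ wcons (flatten (drop j L)) x
  have hkey : ∀ d j, j + d = L.length →
      lexLe (omegaPow L.getLastI) (wcons ((L.drop j).flatten) (omegaPow L.getLastI)) := by
    intro d
    induction d with
    | zero =>
      intro j hj
      rw [List.drop_eq_nil_of_le (by omega), List.flatten_nil, wcons_nil]
      exact lexLe_refl _
    | succ d ihd =>
      intro j hj
      have hjlt : j < L.length := by omega
      rw [List.drop_eq_getElem_cons hjlt, List.flatten_cons, wcons_append]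
      exact star_lemma hqLyn (hLyn _ (List.getElem_mem _)).1 (chain' j hjlt)
        (ihd (j + 1) (by omega))
  -- the central claim
  have hmain : ∀ s, s <:+ L.flatten → s ≠ [] →
      lexLe (omegaPow L.getLastI) (omegaPow s) ∧
      (omegaPow s = omegaPow L.getLastI → L.getLastI <:+ s) := by
    intro s hs hne
    obtain ⟨j, hj, v, hvsuf, hvne, rfl⟩ := suffix_flatten_decomp L s hs hne
    by_cases hveq : v = L[j]'hj
    · subst hveq
      have hsflat : (L[j]'hj) ++ (L.drop (j + 1)).flatten = (L.drop j).flatten := by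
        rw [List.drop_eq_getElem_cons hj, List.flatten_cons]
      rw [hsflat]
      constructor
      · refine lexLe_omegaPow_of_le_wcons ?_ (hkey (L.length - j) j (by omega))
        rw [← hsflat]
        intro hcon
        exact hvne (List.append_eq_nil_iff.mp hcon).1
      · intro _
        have hdropne : L.drop j ≠ [] := by
          intro hcon
          have := congrArg List.length hcon
          simp at this
          omega
        have hlastdrop : (L.drop j).getLastI = L.getLastI := by
          rw [getLastI_eq_getElem' hdropne, hlast]
          have hlen : (L.drop j).length = L.length - j := List.length_drop
          simp only [List.getElem_drop]
          congr 1
          omega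
        rw [← hlastdrop]
        exact lastI_suffix_flatten _ hdropne
    · have hstrict : lexLt (omegaPow (L[j]'hj)) (omegaPow (v ++ (L.drop (j + 1)).flatten)) := by
        refine lyndon_lt_of_proper_suffix (hLyn _ (List.getElem_mem _)) hvsuf hvne hveq _
          (fun i hi => ?_)
        have hilt : i < (v ++ (L.drop (j + 1)).flatten).length := by
          rw [List.length_append]; omega
        rw [omegaPow_val_lt _ hilt, List.getD_append _ _ _ _ hi]
      have hx : lexLt (omegaPow L.getLastI) (omegaPow (v ++ (L.drop (j + 1)).flatten)) :=
        lexLt_of_le_of_lt (chain' j hj) hstrict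
      refine ⟨Or.inl hx, fun hcon => ?_⟩
      rw [hcon] at hx
      exact absurd hx (lexLt_irrefl _)
  refine ⟨lastI_suffix_flatten L hL, fun s hs hne => (hmain s hs hne).1,
    fun s hs hne heq => ((hmain s hs hne).2 heq).length_le,
    fun s hs hne heq hlen => (((hmain s hs hne).2 heq).eq_of_length hlen.symm).symm⟩
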